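/- arXiv:2111.02529 — 5 statements merged into one kernel-verified Lean document; each statement's English description precedes it below -/
import Mathlib

section
/- For squared Euclidean distance, the unbounded general adjuster equals additive adjustment: the matrix a minimizing Σ_i ‖p_{i·} − a_{i·}‖² subject to each row of a summing to 1 and column means (1/n)Σ_i a_{ij} = π_j, is given by a_{i·} = p_{i·} + ε with ε_j = π_j − (1/n)Σ_i p_{ij}. -/
/-!
The problem decouples over columns: membership in `Q_π` fixes each column sum
`∑ i, b i j = n π_j`, hence also `∑ i, (p i j - b i j)`, and among real vectors with a
prescribed sum the constant one has the least sum of squares. Additive adjustment makes every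
column of `p - a` constant, and its shifts `ε_j` sum to `1 - 1 = 0`, so the rows of `a` still
sum to 1.
-/

open Finset

/-- The set `Q_π` of adjusted prediction matrices: rows sum to 1, column means equal `π`. -/
def Qpi (n k : ℕ) (π : Fin k → ℝ) : Set (Fin n → Fin k → ℝ) :=
  {a | (∀ i, ∑ j, a i j = 1) ∧ (∀ j, (1 / (n : ℝ)) * ∑ i, a i j = π j)}

theorem card_mul_sq_le_sum_sq_of_sum_eq {ι : Type*} [Fintype ι] (x : ι → ℝ) (c : ℝ)
    (h : ∑ i, x i = Fintype.card ι * c) : Fintype.card ι * c ^ 2 ≤ ∑ i, x i ^ 2 :=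
  calc (Fintype.card ι : ℝ) * c ^ 2 = ∑ i, x i ^ 2 - ∑ i, (x i - c) ^ 2 := by
        simp only [sub_sq, sum_add_distrib, sum_sub_distrib, ← sum_mul, ← mul_sum, h,
          sum_const, card_univ, nsmul_eq_mul]
        ring
    _ ≤ ∑ i, x i ^ 2 := sub_le_self _ (sum_nonneg fun i _ => sq_nonneg _)

theorem sum_col_eq_of_mem_Qpi {n k : ℕ} (hn : (n : ℝ) ≠ 0) {π : Fin k → ℝ}
    {b : Fin n → Fin k → ℝ} (hb : b ∈ Qpi n k π) (j : Fin k) : ∑ i, b i j = n * π j := by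
  rw [← hb.2 j]
  field_simp

noncomputable def additiveAdjustment {n k : ℕ} (p : Fin n → Fin k → ℝ) (π : Fin k → ℝ) :
    Fin n → Fin k → ℝ :=
  fun i j => p i j + (π j - (1 / n) * ∑ i', p i' j)

theorem additiveAdjustment_mem_Qpi {n k : ℕ} (hn : 0 < n) {p : Fin n → Fin k → ℝ}
    {π : Fin k → ℝ} (hrows : ∀ i, ∑ j, p i j = 1) (hπs : ∑ j, π j = 1) :
    additiveAdjustment p π ∈ Qpi n k π := by
  have hn' : (n : ℝ) ≠ 0 := Nat.cast_ne_zero.mpr hn.ne'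
  have htotal : ∑ j, ∑ i, p i j = n := by
    rw [sum_comm]
    simp [hrows]
  refine ⟨fun i => ?_, fun j => ?_⟩
  · simp only [additiveAdjustment, sum_add_distrib, sum_sub_distrib, ← mul_sum, hrows i, hπs,
      htotal]
    field_simp
    ring
  · simp only [additiveAdjustment, sum_add_distrib, sum_const, card_univ, Fintype.card_fin,
      nsmul_eq_mul]
    field_simp
    ring

theorem sum_sq_sub_additiveAdjustment_le {n k : ℕ} (p b : Fin n → Fin k → ℝ) (π : Fin k → ℝ)
    (hb : ∀ j, ∑ i, b i j = n * π j) :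
    ∑ i, ∑ j, (p i j - additiveAdjustment p π i j) ^ 2 ≤ ∑ i, ∑ j, (p i j - b i j) ^ 2 := by
  rw [sum_comm, sum_comm (f := fun i j => (p i j - b i j) ^ 2)]
  refine sum_le_sum fun j _ => ?_
  set ε := π j - (1 / n) * ∑ i, p i j
  have hcol : ∑ i, (p i j - b i j) = Fintype.card (Fin n) * -ε := by
    rcases Nat.eq_zero_or_pos n with rfl | hn
    · simp
    · rw [sum_sub_distrib, hb j, Fintype.card_fin, mul_neg, mul_sub, ← mul_assoc,
        mul_one_div_cancel (by positivity), one_mul, neg_sub]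
  calc ∑ i, (p i j - additiveAdjustment p π i j) ^ 2 = Fintype.card (Fin n) * (-ε) ^ 2 := by
        simp [additiveAdjustment, ε]
    _ ≤ ∑ i, (p i j - b i j) ^ 2 := card_mul_sq_le_sum_sq_of_sum_eq _ _ hcol

/-- for squared Euclidean distance the unbounded general adjuster is additive
adjustment: `a = p + ε` (with `ε_j = π_j − (1/n)Σ_i p_{ij}`) lies in `Q_π` and minimizes
`Σ_i ‖p_i − a_i‖²` over `Q_π`. -/
theorem uga_squared_euclidean_is_additive {n k : ℕ} (hn : 0 < n)
    (p : Fin n → Fin k → ℝ) (π : Fin k → ℝ)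
    (hrows : ∀ i, ∑ j, p i j = 1) (hπs : ∑ j, π j = 1)
    (ε : Fin k → ℝ) (hε : ∀ j, ε j = π j - (1 / n) * ∑ i, p i j)
    (a : Fin n → Fin k → ℝ) (ha : ∀ i j, a i j = p i j + ε j) :
    a ∈ Qpi n k π ∧
      ∀ b ∈ Qpi n k π, ∑ i, ∑ j, (p i j - a i j) ^ 2 ≤ ∑ i, ∑ j, (p i j - b i j) ^ 2 := by
  obtain rfl : a = additiveAdjustment p π := by
    funext i j
    rw [ha, hε]
    rfl
  exact ⟨additiveAdjustment_mem_Qpi hn hrows hπs, fun b hb =>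
    sum_sq_sub_additiveAdjustment_le p b π (sum_col_eq_of_mem_Qpi (by positivity) hb)⟩
end

section
/- Pythagorean decomposition for UGA: if a★ = α★(p,π) is the unbounded general adjuster output for Bregman divergence d_φ, then for any q ∈ Q_π, (1/n)Σ_i [d_φ(p_{i·}, q_{i·}) − d_φ(a★_{i·}, q_{i·})] = (1/n)Σ_i d_φ(p_{i·}, a★_{i·}). In particular, taking q = y the true labels, the loss after adjustment decomposes: average loss of p equals average loss of a★ plus (1/n)Σ_i d_φ(p_{i·}, a★_{i·}) ≥ 0. -/
/-!
By the three-point identity, `d_φ(p_i, q_i) − d_φ(a★_i, q_i)` is `d_φ(p_i, a★_i)` plus the cross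
term `⟨q_i − a★_i, ∇φ(a★_i) − ∇φ(p_i)⟩`. Stationarity turns the gradient difference into
`−θ_i − λ_j`, and because `q` and `a★` have the same row sums and the same column sums, the cross
terms cancel after summing over `i`. Nonnegativity of `d_φ` is the tangent-plane inequality for
the convex function `φ`.
-/

/-- Bregman divergence of `φ` with gradient map `g`. -/
noncomputable def bregman {k : ℕ} (φ : (Fin k → ℝ) → ℝ) (g : (Fin k → ℝ) → Fin k → ℝ)
    (p q : Fin k → ℝ) : ℝ :=
  φ q - φ p - ∑ j, (q j - p j) * g p j

theorem ConvexOn.le_sub_of_hasFDerivAt {E : Type*} [NormedAddCommGroup E] [NormedSpace ℝ E]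
    {f : E → ℝ} {f' : E →L[ℝ] ℝ} {x : E} (hf : ConvexOn ℝ Set.univ f) (hf' : HasFDerivAt f f' x)
    (y : E) : f' (y - x) ≤ f y - f x := by
  have hline : HasDerivAt (fun t : ℝ => x + t • (y - x)) (y - x) 0 := by
    simpa using ((hasDerivAt_id (0 : ℝ)).smul_const (y - x)).const_add x
  have hderiv : HasDerivAt (fun t : ℝ => f (x + t • (y - x))) (f' (y - x)) 0 :=
    (by simpa using hf' : HasFDerivAt f f' (x + (0 : ℝ) • (y - x))).comp_hasDerivAt 0 hline
  have hconv : ConvexOn ℝ Set.univ (fun t : ℝ => f (x + t • (y - x))) := by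
    simpa [Function.comp_def, AffineMap.lineMap_apply_module', add_comm] using
      hf.comp_affineMap (AffineMap.lineMap x y)
  simpa [slope_def_field] using
    hconv.le_slope_of_hasDerivAt (Set.mem_univ 0) (Set.mem_univ 1) one_pos hderiv

theorem bregman_nonneg {k : ℕ} {φ : (Fin k → ℝ) → ℝ} {g : (Fin k → ℝ) → Fin k → ℝ}
    (hφ : ConvexOn ℝ Set.univ φ)
    (hg : ∀ x, HasGradientAt (fun y : EuclideanSpace ℝ (Fin k) => φ ((WithLp.equiv 2 (Fin k → ℝ)) y))
      ((WithLp.equiv 2 (Fin k → ℝ)).symm (g x)) ((WithLp.equiv 2 (Fin k → ℝ)).symm x))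
    (x y : Fin k → ℝ) : 0 ≤ bregman φ g x y := by
  have hconv : ConvexOn ℝ Set.univ (fun y : EuclideanSpace ℝ (Fin k) => φ (WithLp.equiv 2 _ y)) :=
    hφ.comp_linearMap (WithLp.linearEquiv 2 ℝ (Fin k → ℝ)).toLinearMap
  have h := hconv.le_sub_of_hasFDerivAt (hg x).hasFDerivAt ((WithLp.equiv 2 _).symm y)
  rw [bregman, sub_nonneg]
  simpa [PiLp.inner_apply] using h

theorem bregman_sub_bregman {k : ℕ} (φ : (Fin k → ℝ) → ℝ) (g : (Fin k → ℝ) → Fin k → ℝ)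
    (p a q : Fin k → ℝ) :
    bregman φ g p q - bregman φ g a q
      = bregman φ g p a + ∑ j, (q j - a j) * (g a j - g p j) := by
  simp only [bregman, mul_sub, sub_mul, Finset.sum_sub_distrib]
  ring

theorem Finset.sum_sum_sub_mul_sub_eq_zero {ι κ R : Type*} [Fintype ι] [Fintype κ] [CommRing R]
    {q a : ι → κ → R} (u : ι → R) (v : κ → R) (hrow : ∀ i, ∑ j, q i j = ∑ j, a i j)
    (hcol : ∀ j, ∑ i, q i j = ∑ i, a i j) :
    ∑ i, ∑ j, (q i j - a i j) * (u i - v j) = 0 := by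
  calc _ = ∑ i, ∑ j, (q i j - a i j) * u i - ∑ j, ∑ i, (q i j - a i j) * v j := by
        simp only [mul_sub, Finset.sum_sub_distrib]
        rw [Finset.sum_comm (f := fun i j => (q i j - a i j) * v j)]
    _ = 0 := by
        simp only [← Finset.sum_mul, Finset.sum_sub_distrib, hrow, hcol, sub_self, zero_mul,
          Finset.sum_const_zero]

theorem Qpi.sum_col_eq {n k : ℕ} {π : Fin k → ℝ} {q a : Fin n → Fin k → ℝ} (hn : 0 < n)
    (hq : q ∈ Qpi n k π) (ha : a ∈ Qpi n k π) (j : Fin k) : ∑ i, q i j = ∑ i, a i j :=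
  mul_left_cancel₀ (by positivity) ((hq.2 j).trans (ha.2 j).symm)

/-- Pythagorean decomposition for UGA: with `a★` the UGA output (satisfying the
Lagrange stationarity conditions on `Q_π`), for any `q ∈ Q_π`,
`(1/n)Σ_i [d_φ(p_i,q_i) − d_φ(a★_i,q_i)] = (1/n)Σ_i d_φ(p_i,a★_i)`; in particular the average
loss of `p` equals the average loss of `a★` plus the nonnegative term `(1/n)Σ_i d_φ(p_i,a★_i)`. -/
theorem uga_pythagorean_decomposition {n k : ℕ} (hn : 0 < n)
    (φ : (Fin k → ℝ) → ℝ) (g : (Fin k → ℝ) → Fin k → ℝ)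
    (hφ : ConvexOn ℝ Set.univ φ)
    (hg : ∀ x, HasGradientAt (fun y : EuclideanSpace ℝ (Fin k) => φ ((WithLp.equiv 2 (Fin k → ℝ)) y))
      ((WithLp.equiv 2 (Fin k → ℝ)).symm (g x)) ((WithLp.equiv 2 (Fin k → ℝ)).symm x))
    (p astar : Fin n → Fin k → ℝ) (π : Fin k → ℝ)
    (ha : astar ∈ Qpi n k π)
    (θ : Fin n → ℝ) (lam : Fin k → ℝ)
    (hstat : ∀ i j, g (astar i) j - g (p i) j = -θ i - lam j) :
    ∀ q ∈ Qpi n k π,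
      ((1 / n) * ∑ i, (bregman φ g (p i) (q i) - bregman φ g (astar i) (q i))
          = (1 / n) * ∑ i, bregman φ g (p i) (astar i))
        ∧ ((1 / n) * ∑ i, bregman φ g (p i) (q i)
            = (1 / n) * ∑ i, bregman φ g (astar i) (q i)
              + (1 / n) * ∑ i, bregman φ g (p i) (astar i))
        ∧ 0 ≤ (1 / n) * ∑ i, bregman φ g (p i) (astar i) := by
  intro q hq
  have hcross : ∑ i, ∑ j, (q i j - astar i j) * (g (astar i) j - g (p i) j) = 0 := by
    simp only [hstat]
    exact Finset.sum_sum_sub_mul_sub_eq_zero (fun i => -θ i) lam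
      (fun i => (hq.1 i).trans (ha.1 i).symm) (Qpi.sum_col_eq hn hq ha)
  have hpyth : ∑ i, (bregman φ g (p i) (q i) - bregman φ g (astar i) (q i))
      = ∑ i, bregman φ g (p i) (astar i) := by
    simp only [bregman_sub_bregman, Finset.sum_add_distrib, hcross, add_zero]
  have hnonneg : 0 ≤ ∑ i, bregman φ g (p i) (astar i) :=
    Finset.sum_nonneg fun i _ => bregman_nonneg hφ hg (p i) (astar i)
  refine ⟨by rw [hpyth], ?_, mul_nonneg (by positivity) hnonneg⟩
  rw [← hpyth, Finset.sum_sub_distrib]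
  ring
end

section
/- The UGA is coherent with its Bregman divergence: for a★ = α★(p,π), the quantity [d_φ(a★_{x·}, e_i) − d_φ(a★_{x·}, e_j)] − [d_φ(p_{x·}, e_i) − d_φ(p_{x·}, e_j)] = ⟨e_j − e_i, ∇φ(a★_{x·}) − ∇φ(p_{x·})⟩ does not depend on the instance index x, for all class indices i, j. -/
/-- One-hot vector of class `j`. -/
def oneHot {k : ℕ} (j : Fin k) : Fin k → ℝ := fun m => if m = j then 1 else 0

lemma breg_key {k : ℕ} (φ : (Fin k → ℝ) → ℝ) (g : (Fin k → ℝ) → Fin k → ℝ)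
    (a b : Fin k → ℝ) (i j : Fin k) :
    (bregman φ g a (oneHot i) - bregman φ g a (oneHot j))
      - (bregman φ g b (oneHot i) - bregman φ g b (oneHot j))
      = ∑ m, (oneHot j m - oneHot i m) * (g a m - g b m) := by
  simp only [bregman, sub_mul, mul_sub, Finset.sum_sub_distrib]
  ring

lemma oneHot_sum {k : ℕ} (i j : Fin k) (c : Fin k → ℝ) :
    ∑ m, (oneHot j m - oneHot i m) * c m = c j - c i := by
  simp [oneHot, sub_mul, ite_mul, Finset.sum_sub_distrib]

/-- the UGA is coherent with its Bregman divergence: for `a★` satisfying the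
Lagrange stationarity conditions, the quantity
`[d_φ(a★_x,e_i) − d_φ(a★_x,e_j)] − [d_φ(p_x,e_i) − d_φ(p_x,e_j)]`
equals `⟪e_j − e_i, ∇φ(a★_x) − ∇φ(p_x)⟫` and does not depend on the instance `x`. -/
theorem uga_coherent {n k : ℕ} (hn : 0 < n)
    (φ : (Fin k → ℝ) → ℝ) (g : (Fin k → ℝ) → Fin k → ℝ)
    (p astar : Fin n → Fin k → ℝ) (π : Fin k → ℝ)
    (ha : astar ∈ Qpi n k π)
    (θ : Fin n → ℝ) (lam : Fin k → ℝ)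
    (hstat : ∀ x j, g (astar x) j - g (p x) j = -θ x - lam j) :
    ∀ (i j : Fin k) (x : Fin n),
      ((bregman φ g (astar x) (oneHot i) - bregman φ g (astar x) (oneHot j))
          - (bregman φ g (p x) (oneHot i) - bregman φ g (p x) (oneHot j))
        = ∑ m, (oneHot j m - oneHot i m) * (g (astar x) m - g (p x) m))
      ∧ ∀ x' : Fin n,
        ((bregman φ g (astar x) (oneHot i) - bregman φ g (astar x) (oneHot j))
            - (bregman φ g (p x) (oneHot i) - bregman φ g (p x) (oneHot j)))
          = ((bregman φ g (astar x') (oneHot i) - bregman φ g (astar x') (oneHot j))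
              - (bregman φ g (p x') (oneHot i) - bregman φ g (p x') (oneHot j))) := by
  intro i j x
  have hval : ∀ y : Fin n,
      (bregman φ g (astar y) (oneHot i) - bregman φ g (astar y) (oneHot j))
        - (bregman φ g (p y) (oneHot i) - bregman φ g (p y) (oneHot j)) = lam i - lam j := by
    intro y
    rw [breg_key, oneHot_sum i j (fun m => g (astar y) m - g (p y) m), hstat, hstat]
    ring
  refine ⟨breg_key φ g (astar x) (p x) i j, fun x' => by rw [hval x, hval x']⟩
end

section
/- Uniqueness of the decomposing adjuster: suppose a ∈ Q_π satisfies, for all y ∈ Q_π, the decomposition (1/n)Σ_i d_φ(p_{i·}, y_{i·}) = (1/n)Σ_i d_φ(p_{i·}, a_{i·}) + (1/n)Σ_i d_φ(a_{i·}, y_{i·}). Then a = α★(p,π), i.e. a is the unique minimizer of (1/n)Σ_i d_φ(p_{i·}, a'_{i·}) over a' ∈ Q_π. -/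
/-- uniqueness of the decomposing adjuster: if `a ∈ Q_π` satisfies the
decomposition `(1/n)Σ_i d(p_i,y_i) = (1/n)Σ_i d(p_i,a_i) + (1/n)Σ_i d(a_i,y_i)` for all
`y ∈ Q_π`, where `d` is a Bregman divergence (nonnegative, zero iff equal), then `a` is the
unique minimizer of `(1/n)Σ_i d(p_i, ·)` over `Q_π`. -/
theorem decomposing_adjuster_is_uga {n k : ℕ} (hn : 0 < n)
    (d : (Fin k → ℝ) → (Fin k → ℝ) → ℝ)
    (hd0 : ∀ u v, 0 ≤ d u v) (hd_eq : ∀ u v, d u v = 0 ↔ u = v)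
    (p : Fin n → Fin k → ℝ) (π : Fin k → ℝ)
    (a : Fin n → Fin k → ℝ) (haQ : a ∈ Qpi n k π)
    (hdecomp : ∀ y ∈ Qpi n k π,
      (1 / (n : ℝ)) * ∑ i, d (p i) (y i)
        = (1 / n) * ∑ i, d (p i) (a i) + (1 / n) * ∑ i, d (a i) (y i)) :
    ∀ a' ∈ Qpi n k π, a' ≠ a →
      (1 / (n : ℝ)) * ∑ i, d (p i) (a i) < (1 / n) * ∑ i, d (p i) (a' i) := by
  intro a' ha'Q hne
  rw [hdecomp a' ha'Q]
  have hpos : 0 < (1 / (n : ℝ)) * ∑ i, d (a i) (a' i) := by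
    have hi : ∃ i, a i ≠ a' i := by
      by_contra h
      push_neg at h
      exact hne (funext fun i => (h i).symm)
    obtain ⟨i, hi⟩ := hi
    have hsum : 0 < ∑ i, d (a i) (a' i) := by
      apply Finset.sum_pos' (fun j _ => hd0 _ _)
      exact ⟨i, Finset.mem_univ i, lt_of_le_of_ne (hd0 _ _)
        (fun h => hi ((hd_eq _ _).mp h.symm))⟩
    positivity
  linarith
end

section
/- For KL divergence, multiplicative adjustment coincides with UGA: if a_{ij} = w_j p_{ij} / z_i with weights w ≥ 0 and z_i = Σ_j w_j p_{ij}, and a ∈ Q□_π (a is adjusted to π), then a satisfies the Lagrange stationarity conditions of the UGA problem for d_KL(p,a) = Σ_j a_j log(a_j/p_j), namely (∇_a d_KL(p_{i·}, a_{i·}))_j = log(a_{ij}/p_{ij}) + 1 = −θ_i − λ_j for some θ ∈ ℝ^n, λ ∈ ℝ^k (taking λ_j = −log w_j, θ_i = log z_i − 1), assuming all p_{ij}, w_j > 0. -/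
/-- The bounded version `Q□_π`, additionally requiring nonnegative entries. -/
def QpiB (n k : ℕ) (π : Fin k → ℝ) : Set (Fin n → Fin k → ℝ) :=
  {a ∈ Qpi n k π | ∀ i j, 0 ≤ a i j}

/-- for KL divergence, multiplicative adjustment coincides with UGA: if
`a_{ij} = w_j p_{ij} / z_i` with `z_i = Σ_j w_j p_{ij}` and `a ∈ Q□_π`, then `a` satisfies the
Lagrange stationarity conditions of the UGA problem for KL divergence:
`(∇_a d_KL(p_i, a_i))_j = log(a_{ij}/p_{ij}) + 1 = −θ_i − λ_j` for some `θ, λ`. -/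
theorem multiplicative_adjustment_is_uga_for_kl {n k : ℕ} (hn : 0 < n)
    (p : Fin n → Fin k → ℝ) (π : Fin k → ℝ) (w : Fin k → ℝ)
    (hp : ∀ i j, 0 < p i j) (hw : ∀ j, 0 < w j)
    (z : Fin n → ℝ) (hz : ∀ i, z i = ∑ j, w j * p i j)
    (a : Fin n → Fin k → ℝ) (haw : ∀ i j, a i j = w j * p i j / z i)
    (haQ : a ∈ QpiB n k π) :
    ∃ (θ : Fin n → ℝ) (lam : Fin k → ℝ),
      ∀ i j, Real.log (a i j / p i j) + 1 = -θ i - lam j := by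
  refine ⟨fun i => Real.log (z i) - 1, fun j => -Real.log (w j), fun i j => ?_⟩
  have hzpos : 0 < z i := by
    rw [hz]
    exact Finset.sum_pos (fun j' _ => mul_pos (hw j') (hp i j')) ⟨j, Finset.mem_univ j⟩
  have : a i j / p i j = w j / z i := by
    rw [haw]
    rw [div_div, mul_comm (z i) (p i j), ← div_div,
      mul_div_assoc, mul_comm (w j), mul_div_assoc, div_self (ne_of_gt (hp i j)), one_mul]
  rw [this, Real.log_div (ne_of_gt (hw j)) (ne_of_gt hzpos)]
  ring
end
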